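/- Let p ∈ ℝ, q ∈ ℂ with p²+|q|²=1, and a ∈ ℝ, b ∈ ℂ with a²+|b|²=1, θ := arg q if q≠0 and θ := 0 otherwise. Consider the quadratic polynomial P(z) = (1+p)e^{iθ}b z² + 2|q|a z − (1−p)e^{−iθ}conj(b). Then P has no zeros on the unit circle if and only if |p| ≠ |a|, and in that case the number of zeros of P in the open unit disc, counted with multiplicity, equals 2 if |a| < p, equals 1 if |p| < |a|, and equals 0 if |a| < −p. -/

import Mathlib

noncomputable section
open Complex ContinuousLinearMap Filter
open scoped ENNReal ComplexConjugate


/-- `θ := arg q` if `q ≠ 0` and `θ := 0` if `q = 0`. -/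
def theta (q : ℂ) : ℝ := if q = 0 then 0 else q.arg

open scoped Classical in
/-- The number of zeros of a polynomial in the open unit disc, counted with multiplicity. -/
def discZeros (P : Polynomial ℂ) : ℕ := (P.roots.filter (fun z => ‖z‖ < 1)).card

/-- The quadratic polynomial `P_±(z) = (1+p)e^{iθ}b_± z² + 2|q|a_± z - (1-p)e^{-iθ}conj(b_±)`. -/
def Ppoly (p : ℝ) (q : ℂ) (aInf : ℝ) (bInf : ℂ) : Polynomial ℂ :=
  Polynomial.C ((1 + (p:ℂ)) * Complex.exp (theta q * I) * bInf) * Polynomial.X ^ 2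
    + Polynomial.C (2 * (‖q‖ : ℂ) * (aInf : ℂ)) * Polynomial.X
    - Polynomial.C ((1 - (p:ℂ)) * Complex.exp (-(theta q * I)) * (conj bInf))

open Polynomial in
set_option maxHeartbeats 2000000 in
lemma main_case (p : ℝ) (q : ℂ) (hpq : p ^ 2 + ‖q‖ ^ 2 = 1)
    (a : ℝ) (b : ℂ) (hab : a ^ 2 + ‖b‖ ^ 2 = 1) (hb : b ≠ 0) (hp : p ≠ -1) :
    ((∀ z : ℂ, ‖z‖ = 1 → (Ppoly p q a b).eval z ≠ 0) ↔ |p| ≠ |a|) ∧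
    (|p| ≠ |a| →
      (|a| < p → discZeros (Ppoly p q a b) = 2) ∧
      (|p| < |a| → discZeros (Ppoly p q a b) = 1) ∧
      (|a| < -p → discZeros (Ppoly p q a b) = 0)) := by
  have hq2 : ‖q‖ ^ 2 = 1 - p ^ 2 := by linarith
  have hb2 : ‖b‖ ^ 2 = 1 - a ^ 2 := by linarith
  have hbpos : 0 < ‖b‖ := norm_pos_iff.mpr hb
  have ha2 : a ^ 2 < 1 := by nlinarith
  have haup : a < 1 := by nlinarith [sq_nonneg (a - 1)]
  have halo : -1 < a := by nlinarith [sq_nonneg (a + 1)]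
  have hp2 : p ^ 2 ≤ 1 := by nlinarith [sq_nonneg ‖q‖]
  have hpge : -1 ≤ p := by nlinarith [sq_nonneg (p + 1)]
  have hplo : -1 < p := lt_of_le_of_ne hpge (Ne.symm hp)
  have hpup : p ≤ 1 := by nlinarith [sq_nonneg (p - 1)]
  set E : ℂ := Complex.exp (theta q * I) with hEdef
  have hEne : E ≠ 0 := Complex.exp_ne_zero _
  have hEnorm : ‖E‖ = 1 := by
    rw [hEdef]; simp [Complex.norm_exp]
  have hpc : (1 + (p:ℂ)) ≠ 0 := by
    rw [show (1 + (p:ℂ)) = ((1 + p : ℝ) : ℂ) by push_cast; ring]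
    exact_mod_cast (by linarith : (1:ℝ) + p ≠ 0)
  set k : ℂ := (1 + (p:ℂ)) * E * b with hkdef
  have hk : k ≠ 0 := mul_ne_zero (mul_ne_zero hpc hEne) hb
  set z₁ : ℂ := ((‖q‖:ℂ) * (1 - (a:ℂ))) / k with hz₁def
  set z₂ : ℂ := (-((‖q‖:ℂ) * (1 + (a:ℂ)))) / k with hz₂def
  have hbb : b * conj b = 1 - (a:ℂ)^2 := by
    rw [Complex.mul_conj']
    rw [show ((‖b‖:ℂ))^2 = ((‖b‖^2 : ℝ) : ℂ) by push_cast; ring, hb2]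
    push_cast; ring
  have hq2c : ((‖q‖:ℂ))^2 = 1 - (p:ℂ)^2 := by
    rw [show ((‖q‖:ℂ))^2 = ((‖q‖^2 : ℝ) : ℂ) by push_cast; ring, hq2]
    push_cast; ring
  have hEinv : Complex.exp (-(theta q * I)) = E⁻¹ := by rw [Complex.exp_neg, hEdef]
  -- factorization
  have e2 : (2 * (‖q‖:ℂ) * (a:ℂ)) = -(k * (z₁ + z₂)) := by
    rw [hz₁def, hz₂def]
    field_simp
    ring
  have e3 : (1 - (p:ℂ)) * Complex.exp (-(theta q * I)) * (conj b) = -(k * z₁ * z₂) := by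
    rw [hz₁def, hz₂def, hEinv, hkdef]
    field_simp
    linear_combination ((1:ℂ) - (p:ℂ)^2) * hbb - (1 - (a:ℂ))*(1 + (a:ℂ)) * hq2c
  have hfac : Ppoly p q a b = C k * ((X - C z₁) * (X - C z₂)) := by
    unfold Ppoly
    rw [← hEdef, ← hkdef, e2, e3]
    simp only [map_neg, map_mul, map_add]
    ring
  have heval : ∀ z : ℂ, (Ppoly p q a b).eval z = k * ((z - z₁) * (z - z₂)) := by
    intro z; rw [hfac]; simp
  -- norms
  have hknorm : ‖k‖ = (1 + p) * ‖b‖ := by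
    rw [hkdef, norm_mul, norm_mul, hEnorm,
      show (1 + (p:ℂ)) = ((1 + p : ℝ) : ℂ) by push_cast; ring, Complex.norm_real,
      Real.norm_eq_abs, abs_of_pos (by linarith : (0:ℝ) < 1 + p)]
    ring
  have hzn1 : ‖z₁‖ = ‖q‖ * (1 - a) / ((1 + p) * ‖b‖) := by
    rw [hz₁def, norm_div, norm_mul, hknorm,
      show (1 - (a:ℂ)) = ((1 - a : ℝ) : ℂ) by push_cast; ring, Complex.norm_real,
      Complex.norm_real, Real.norm_eq_abs, Real.norm_eq_abs, abs_norm,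
      abs_of_pos (by linarith : (0:ℝ) < 1 - a)]
  have hzn2 : ‖z₂‖ = ‖q‖ * (1 + a) / ((1 + p) * ‖b‖) := by
    rw [hz₂def, norm_div, norm_neg, norm_mul, hknorm,
      show (1 + (a:ℂ)) = ((1 + a : ℝ) : ℂ) by push_cast; ring, Complex.norm_real,
      Complex.norm_real, Real.norm_eq_abs, Real.norm_eq_abs, abs_norm,
      abs_of_pos (by linarith : (0:ℝ) < 1 + a)]
  clear_value E k z₁ z₂
  have hd1 : (0:ℝ) < (1 + p) * (1 + a) := by nlinarith
  have hd2 : (0:ℝ) < (1 + p) * (1 - a) := by nlinarith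
  have key1 : ‖z₁‖^2 = (1 - p) * (1 - a) / ((1 + p) * (1 + a)) := by
    rw [hzn1, div_pow, div_eq_div_iff (pow_pos (mul_pos (by linarith) hbpos) 2).ne' hd1.ne']
    linear_combination ((1-a)^2*(1+p)*(1+a)) * hq2 - ((1-p)*(1-a)*(1+p)^2) * hb2
  have key2 : ‖z₂‖^2 = (1 - p) * (1 + a) / ((1 + p) * (1 - a)) := by
    rw [hzn2, div_pow, div_eq_div_iff (pow_pos (mul_pos (by linarith) hbpos) 2).ne' hd2.ne']
    linear_combination ((1+a)^2*(1+p)*(1-a)) * hq2 - ((1-p)*(1+a)*(1+p)^2) * hb2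
  have hsq1 : ‖z₁‖ = Real.sqrt (‖z₁‖^2) := by rw [Real.sqrt_sq (norm_nonneg z₁)]
  have hsq2 : ‖z₂‖ = Real.sqrt (‖z₂‖^2) := by rw [Real.sqrt_sq (norm_nonneg z₂)]
  have hone : (1:ℝ) = Real.sqrt 1 := by simp
  have hz1lt : ‖z₁‖ < 1 ↔ 0 < a + p := by
    rw [hone, hsq1, Real.sqrt_lt_sqrt_iff (by positivity), key1, div_lt_one hd1]
    constructor <;> intro h <;> nlinarith
  have hz2lt : ‖z₂‖ < 1 ↔ a < p := by
    rw [hone, hsq2, Real.sqrt_lt_sqrt_iff (by positivity), key2, div_lt_one hd2]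
    constructor <;> intro h <;> nlinarith
  have hz1eq : ‖z₁‖ = 1 ↔ a + p = 0 := by
    rw [hone, hsq1, Real.sqrt_inj (by positivity) (by norm_num), key1,
      div_eq_one_iff_eq hd1.ne']
    constructor <;> intro h <;> nlinarith
  have hz2eq : ‖z₂‖ = 1 ↔ a = p := by
    rw [hone, hsq2, Real.sqrt_inj (by positivity) (by norm_num), key2,
      div_eq_one_iff_eq hd2.ne']
    constructor <;> intro h <;> nlinarith
  have hroots : (Ppoly p q a b).roots = {z₁, z₂} := by
    rw [hfac, roots_C_mul _ hk,
      roots_mul (mul_ne_zero (X_sub_C_ne_zero z₁) (X_sub_C_ne_zero z₂)),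
      roots_X_sub_C, roots_X_sub_C]
    rfl
  have hcard : discZeros (Ppoly p q a b)
      = (if ‖z₁‖ < 1 then 1 else 0) + (if ‖z₂‖ < 1 then 1 else 0) := by
    classical
    unfold discZeros
    rw [hroots, show ({z₁, z₂} : Multiset ℂ) = z₁ ::ₘ {z₂} from rfl,
      Multiset.filter_cons, Multiset.filter_singleton]
    split_ifs <;> simp
  constructor
  · constructor
    · intro h habs
      rcases abs_eq_abs.mp habs with h1 | h1
      · exact h z₂ (hz2eq.mpr h1.symm) (by rw [heval]; ring)
      · exact h z₁ (hz1eq.mpr (by linarith)) (by rw [heval]; ring)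
    · intro hne z hz h0
      rw [heval] at h0
      rcases mul_eq_zero.mp h0 with h0 | h0
      · exact hk h0
      rcases mul_eq_zero.mp h0 with h0 | h0
      · have h1 : ‖z₁‖ = 1 := by rw [← sub_eq_zero.mp h0]; exact hz
        exact hne (abs_eq_abs.mpr (Or.inr (by linarith [hz1eq.mp h1])))
      · have h1 : ‖z₂‖ = 1 := by rw [← sub_eq_zero.mp h0]; exact hz
        exact hne (abs_eq_abs.mpr (Or.inl (hz2eq.mp h1).symm))
  · intro hne
    refine ⟨?_, ?_, ?_⟩
    · intro h
      obtain ⟨h1, h2⟩ := abs_lt.mp h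
      rw [hcard, if_pos (hz1lt.mpr (by linarith)), if_pos (hz2lt.mpr h2)]
    · intro h
      rcases le_or_gt 0 a with ha | ha
      · have haa : |a| = a := abs_of_nonneg ha
        have h3 := le_abs_self p
        have h4 := neg_abs_le p
        rw [hcard, if_pos (hz1lt.mpr (by linarith)),
          if_neg (by rw [hz2lt]; linarith)]
      · have haa : |a| = -a := abs_of_neg ha
        have h3 := le_abs_self p
        have h4 := neg_abs_le p
        rw [hcard, if_neg (by rw [hz1lt]; linarith),
          if_pos (hz2lt.mpr (by linarith))]
    · intro h
      obtain ⟨h1, h2⟩ := abs_lt.mp h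
      have h3 := le_abs_self a
      have h4 := neg_abs_le a
      rw [hcard, if_neg (by rw [hz1lt]; linarith),
        if_neg (by rw [hz2lt]; linarith)]

/-- **Counting the zeros of the symbol polynomial in the unit disc.**  For `p² + |q|² = 1` and
`a² + |b|² = 1`, the polynomial `P(z) = (1+p)e^{iθ}b z² + 2|q|a z - (1-p)e^{-iθ}conj(b)` has
no zeros on the unit circle iff `|p| ≠ |a|`; in that case the number of its zeros in the open
unit disc (with multiplicity) is `2` if `|a| < p`, `1` if `|p| < |a|`, and `0` if `|a| < -p`. -/
theorem discZeros_of_symbol_polynomial (p : ℝ) (q : ℂ) (hpq : p ^ 2 + ‖q‖ ^ 2 = 1)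
    (a : ℝ) (b : ℂ) (hab : a ^ 2 + ‖b‖ ^ 2 = 1) :
    ((∀ z : ℂ, ‖z‖ = 1 → (Ppoly p q a b).eval z ≠ 0) ↔ |p| ≠ |a|) ∧
    (|p| ≠ |a| →
      (|a| < p → discZeros (Ppoly p q a b) = 2) ∧
      (|p| < |a| → discZeros (Ppoly p q a b) = 1) ∧
      (|a| < -p → discZeros (Ppoly p q a b) = 0)) := by
  by_cases hb : b = 0
  · by_cases hq : q = 0
    · -- b = 0, q = 0 : P is the zero polynomial and |p| = |a| = 1
      have hP : Ppoly p q a b = 0 := by simp [Ppoly, hb, hq]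
      have hp1 : p ^ 2 = 1 := by simpa [hq] using hpq
      have ha1 : a ^ 2 = 1 := by simpa [hb] using hab
      have hpa : |p| = |a| := by
        nlinarith [abs_nonneg p, abs_nonneg a, _root_.sq_abs p, _root_.sq_abs a]
      constructor
      · refine iff_of_false ?_ (fun hn => hn hpa)
        intro h
        exact (h 1 (by simp)) (by simp [hP])
      · exact fun hne => absurd hpa hne
    · -- b = 0, q ≠ 0 : P = C (2‖q‖a) * X
      have ha1 : a ^ 2 = 1 := by simpa [hb] using hab
      have haabs : |a| = 1 := by nlinarith [abs_nonneg a, _root_.sq_abs a]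
      have hqpos : 0 < ‖q‖ := norm_pos_iff.mpr hq
      have hpabs : |p| < 1 := by nlinarith [_root_.sq_abs p, abs_nonneg p]
      have hane : a ≠ 0 := by intro h; rw [h] at ha1; norm_num at ha1
      have hP : Ppoly p q a b = Polynomial.C (2 * (‖q‖:ℂ) * (a:ℂ)) * Polynomial.X := by
        simp [Ppoly, hb]
      have hcoef : (2 * (‖q‖:ℂ) * (a:ℂ)) ≠ 0 :=
        mul_ne_zero (mul_ne_zero two_ne_zero (by exact_mod_cast hqpos.ne'))
          (by exact_mod_cast hane)
      constructor
      · refine iff_of_true ?_ (by rw [haabs]; exact ne_of_lt hpabs)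
        intro z hz
        rw [hP]
        simp only [Polynomial.eval_mul, Polynomial.eval_C, Polynomial.eval_X]
        exact mul_ne_zero hcoef (fun h => by simp [h] at hz)
      · intro _
        have hroots : (Ppoly p q a b).roots = {0} := by
          rw [hP, Polynomial.roots_C_mul _ hcoef, Polynomial.roots_X]
        have hdz : discZeros (Ppoly p q a b) = 1 := by
          unfold discZeros
          rw [hroots, Multiset.filter_singleton, if_pos (by norm_num)]
          rfl
        refine ⟨fun h => ?_, fun _ => hdz, fun h => ?_⟩
        · rw [haabs] at h; linarith [le_abs_self p]
        · rw [haabs] at h; linarith [neg_abs_le p]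
  · by_cases hp : p = -1
    · -- b ≠ 0, p = -1 : q = 0 and P is a nonzero constant
      have hq1 : ‖q‖ = 0 := by
        rw [hp] at hpq; nlinarith [norm_nonneg q]
      have hq0 : q = 0 := norm_eq_zero.mp hq1
      have hP : Ppoly p q a b = Polynomial.C (-(2 * conj b)) := by
        unfold Ppoly
        rw [hp, hq0,
          show ((1:ℂ) + ((-1:ℝ):ℂ)) = 0 by norm_num,
          show ((1:ℂ) - ((-1:ℝ):ℂ)) = 2 by norm_num]
        simp [theta]
      have hcne : (-(2 * conj b) : ℂ) ≠ 0 := by simp [hb]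
      have hbpos : 0 < ‖b‖ := norm_pos_iff.mpr hb
      have haabs : |a| < 1 := by nlinarith [_root_.sq_abs a, abs_nonneg a, sq_nonneg ‖b‖]
      constructor
      · refine iff_of_true ?_ ?_
        · intro z hz
          rw [hP, Polynomial.eval_C]
          exact hcne
        · rw [hp, abs_neg, abs_one]
          exact ne_of_gt haabs
      · intro _
        have hdz : discZeros (Ppoly p q a b) = 0 := by
          unfold discZeros
          rw [hP, Polynomial.roots_C]
          rfl
        refine ⟨fun h => ?_, fun h => ?_, fun _ => hdz⟩
        · rw [hp] at h; linarith [abs_nonneg a]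
        · rw [hp, abs_neg, abs_one] at h; linarith
    · exact main_case p q hpq a b hab hb hp
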